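/- (Subdifferentiation of convex optimal value functions.) Let X, Y be real vector spaces, F : X ⇉ Y a set-valued mapping with convex graph, and φ : X × Y → ℝ ∪ {+∞} a convex function. Define the optimal value function μ(x) := inf{φ(x,y) | y ∈ F(x)}, and assume: core(gph(F)) ≠ ∅, core(epi(φ)) ≠ ∅, μ(x) > −∞ for all x ∈ X, and the qualification condition core(dom(φ)) ∩ core(gph(F)) ≠ ∅. Let x̄ ∈ dom(μ) and let ȳ ∈ F(x̄) satisfy μ(x̄) = φ(x̄,ȳ). Then ∂μ(x̄) = ⋃_{(f,g) ∈ ∂φ(x̄,ȳ)} (f + D*F(x̄,ȳ)(g)), i.e., h ∈ ∂μ(x̄) iff there exist linear f : X → ℝ and g : Y → ℝ with (f,g) ∈ ∂φ(x̄,ȳ) and h − f ∈ D*F(x̄,ȳ)(g). -/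

import Mathlib

/-- The algebraic core of a set `Ω` in a real vector space. -/
def algCore {X : Type*} [AddCommGroup X] [Module ℝ X] (Ω : Set X) : Set X :=
  {x | x ∈ Ω ∧ ∀ v : X, ∃ δ > (0 : ℝ), ∀ t : ℝ, |t| < δ → x + t • v ∈ Ω}

/-- The graph of a set-valued mapping `F : X ⇉ Y`. -/
def gph {X Y : Type*} (F : X → Set Y) : Set (X × Y) := {p | p.2 ∈ F p.1}

/-- The coderivative of a set-valued mapping `F` at `(xb, yb) ∈ gph F`. -/
def coderiv {X Y : Type*} [AddCommGroup X] [Module ℝ X] [AddCommGroup Y] [Module ℝ Y]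
    (F : X → Set Y) (xb : X) (yb : Y) (g : Y →ₗ[ℝ] ℝ) : Set (X →ₗ[ℝ] ℝ) :=
  {f | yb ∈ F xb ∧ ∀ x : X, ∀ y ∈ F x, f (x - xb) - g (y - yb) ≤ 0}

/-- The epigraph of an extended-real-valued function. -/
def epi {X : Type*} (φ : X → EReal) : Set (X × ℝ) :=
  {p | φ p.1 ≤ (p.2 : EReal)}

/-- The subdifferential of an extended-real-valued function at `xb`. -/
def subdiff {X : Type*} [AddCommGroup X] [Module ℝ X] (φ : X → EReal) (xb : X) :
    Set (X →ₗ[ℝ] ℝ) :=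
  {f | ∀ x : X, φ xb + ((f (x - xb) : ℝ) : EReal) ≤ φ x}

/-- The subdifferential of a convex function of two variables at `(xb, yb)`,
with subgradients identified with pairs of linear functionals. -/
def subdiff2 {X Y : Type*} [AddCommGroup X] [Module ℝ X] [AddCommGroup Y] [Module ℝ Y]
    (φ : X × Y → EReal) (xb : X) (yb : Y) :
    Set ((X →ₗ[ℝ] ℝ) × (Y →ₗ[ℝ] ℝ)) :=
  {fg | ∀ u : X × Y, φ (xb, yb) + ((fg.1 (u.1 - xb) + fg.2 (u.2 - yb) : ℝ) : EReal) ≤ φ u}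

/-- The optimal value (marginal) function `μ(x) = inf {φ(x,y) | y ∈ F(x)}`. -/
noncomputable def optVal {X Y : Type*} (F : X → Set Y) (φ : X × Y → EReal) : X → EReal :=
  fun x => ⨅ y ∈ F x, φ (x, y)

/-!
If `h ∈ ∂μ(x̄)`, then `(x̄, ȳ)` minimises `φ(x, y) - h(x - x̄)` over `gph F`, so in `X × Y × ℝ` the
epigraph of `φ` and the part of `gph F × ℝ` lying below the affine function `μ(x̄) + h(x - x̄)`
are convex, the first has nonempty algebraic core, and that core misses the second set.
Hahn–Banach, applied to the gauge of an algebraically open convex set, separates them by a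
linear functional. The qualification condition forbids a vertical separating hyperplane, and
after normalising the vertical component the horizontal part of the functional is a subgradient
`(f, g)` of `φ` for which `h - f ∈ D*F(x̄, ȳ)(g)`. The reverse inclusion is a chain of
inequalities.
-/

open Set Filter Topology
open scoped Pointwise

section AlgCore

variable {W : Type*} [AddCommGroup W] [Module ℝ W] {S T : Set W}

theorem mem_algCore_iff {x : W} :
    x ∈ algCore S ↔ x ∈ S ∧ ∀ v : W, ∀ᶠ t in 𝓝 (0 : ℝ), x + t • v ∈ S := by
  simp only [algCore, Set.mem_ofPred_eq, Metric.eventually_nhds_iff, Real.dist_eq, sub_zero]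

theorem exists_pos_add_smul_mem_of_mem_algCore {x : W} (hx : x ∈ algCore S) (v : W) :
    ∃ t > (0 : ℝ), x + t • v ∈ S := by
  obtain ⟨δ, hδ, h⟩ := hx.2 v
  exact ⟨δ / 2, half_pos hδ, h _ (by rw [abs_of_pos (half_pos hδ)]; linarith)⟩

theorem Convex.convex_algCore (hS : Convex ℝ S) : Convex ℝ (algCore S) := by
  intro x hx y hy a b ha hb hab
  rw [mem_algCore_iff] at hx hy ⊢
  refine ⟨hS hx.1 hy.1 ha hb hab, fun v => ?_⟩
  filter_upwards [hx.2 v, hy.2 v] with t hxt hyt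
  convert hS hxt hyt ha hb hab using 1
  rw [smul_add, smul_add, add_add_add_comm, ← add_smul, hab, one_smul]

theorem Convex.combo_algCore_self_mem_algCore (hS : Convex ℝ S) {x y : W} (hx : x ∈ algCore S)
    (hy : y ∈ S) {a b : ℝ} (ha : 0 < a) (hb : 0 ≤ b) (hab : a + b = 1) :
    a • x + b • y ∈ algCore S := by
  rw [mem_algCore_iff] at hx ⊢
  refine ⟨hS hx.1 hy ha.le hb hab, fun v => ?_⟩
  have hlim : Tendsto (fun t : ℝ => t / a) (𝓝 0) (𝓝 0) := by
    simpa using (continuous_id.div_const a).tendsto 0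
  filter_upwards [hlim.eventually (hx.2 v)] with t ht
  convert hS ht hy ha.le hb hab using 1
  rw [smul_add, smul_smul, mul_div_cancel₀ t ha.ne', add_right_comm]

theorem Convex.algCore_algCore (hS : Convex ℝ S) : algCore (algCore S) = algCore S := by
  refine Subset.antisymm (fun x hx => hx.1) fun x hx => ?_
  have hx' := mem_algCore_iff.1 hx
  have hlim : Tendsto (fun t : ℝ => 2 * t) (𝓝 0) (𝓝 0) := by
    simpa using (continuous_const_mul (2 : ℝ)).tendsto 0
  refine mem_algCore_iff.2 ⟨hx, fun v => ?_⟩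
  filter_upwards [hlim.eventually (hx'.2 v), hx'.2 v] with t h2t ht
  refine mem_algCore_iff.2 ⟨ht, fun w => ?_⟩
  filter_upwards [hlim.eventually (hx'.2 w)] with s hs
  convert hS h2t hs (a := 1 / 2) (b := 1 / 2) (by norm_num) (by norm_num) (by norm_num) using 1
  module

theorem sub_mem_algCore_sub {a b : W} (ha : a ∈ algCore S) (hb : b ∈ T) :
    a - b ∈ algCore (S - T) := by
  rw [mem_algCore_iff] at ha ⊢
  refine ⟨Set.sub_mem_sub ha.1 hb, fun v => ?_⟩
  filter_upwards [ha.2 v] with t ht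
  simpa only [sub_add_eq_add_sub] using Set.sub_mem_sub ht hb

theorem absorbent_of_zero_mem_algCore (h : 0 ∈ algCore S) : Absorbent ℝ S := by
  rw [absorbent_iff_eventually_nhdsNE_zero]
  intro v
  have h0 := (mem_algCore_iff.1 h).2 v
  simp only [zero_add] at h0
  exact nhdsWithin_le_nhds h0

theorem gauge_lt_one_of_mem_algCore {x : W} (hx : x ∈ algCore S) : gauge S x < 1 := by
  obtain ⟨t, ht, hxt⟩ := exists_pos_add_smul_mem_of_mem_algCore hx x
  have h : (1 + t) * gauge S x ≤ 1 := by
    rw [← smul_eq_mul, ← gauge_smul_of_nonneg (by positivity), add_smul, one_smul]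
    exact gauge_le_one_of_mem hxt
  nlinarith [gauge_nonneg (s := S) x]

theorem LinearMap.eq_zero_of_isMaxOn_algCore {N : W →ₗ[ℝ] ℝ} {u : W} (hu : u ∈ algCore S)
    (hmax : IsMaxOn N S u) : N = 0 := by
  have hle : ∀ v, N v ≤ 0 := fun v => by
    obtain ⟨t, ht, hS⟩ := exists_pos_add_smul_mem_of_mem_algCore hu v
    have := isMaxOn_iff.1 hmax _ hS
    rw [map_add, map_smul, smul_eq_mul] at this
    nlinarith
  ext v
  rw [LinearMap.zero_apply]
  linarith [hle v, hle (-v), N.map_neg v]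

end AlgCore

section Separation

variable {W : Type*} [AddCommGroup W] [Module ℝ W] {S A B : Set W}

theorem Convex.le_of_forall_algCore_lt (hS : Convex ℝ S) {x₀ : W} (hx₀ : x₀ ∈ algCore S)
    (f : W →ₗ[ℝ] ℝ) {c : ℝ} (hlt : ∀ x ∈ algCore S, f x < c) {x : W} (hx : x ∈ S) :
    f x ≤ c := by
  have hlim : Tendsto (fun t : ℝ => f (t • x₀ + (1 - t) • x)) (𝓝[>] 0) (𝓝 (f x)) := by
    have hcont : Continuous fun t : ℝ => t * f x₀ + (1 - t) * f x := by fun_prop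
    simpa using (hcont.tendsto 0).mono_left nhdsWithin_le_nhds
  refine le_of_tendsto hlim ?_
  filter_upwards [Ioo_mem_nhdsGT one_pos] with t ht
  exact (hlt _ (hS.combo_algCore_self_mem_algCore hx₀ hx ht.1 (by linarith [ht.2]) (by ring))).le

theorem Convex.exists_lt_of_notMem (hS : Convex ℝ S) {x₀ z : W} (hx₀ : x₀ ∈ algCore S)
    (hz : z ∉ S) : ∃ Λ : W →ₗ[ℝ] ℝ, ∀ x ∈ algCore S, Λ x < Λ z := by
  set S₀ := (x₀ + ·) ⁻¹' S
  have hcore : ∀ x, x ∈ algCore S₀ ↔ x₀ + x ∈ algCore S := by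
    simp [S₀, algCore, add_assoc]
  have hS₀ : Convex ℝ S₀ := hS.translate_preimage_right x₀
  have h0 : (0 : W) ∈ algCore S₀ := (hcore 0).2 (by rwa [add_zero])
  have habs : Absorbent ℝ S₀ := absorbent_of_zero_mem_algCore h0
  have hz₀ : z - x₀ ∉ S₀ := by simpa [S₀] using hz
  set f : W →ₗ.[ℝ] ℝ := .mkSpanSingleton (z - x₀) 1 (ne_of_mem_of_not_mem h0.1 hz₀).symm
  have hf : ∀ x : f.domain, f x ≤ gauge S₀ x := by
    rintro ⟨x, hx⟩
    obtain ⟨c, rfl⟩ := Submodule.mem_span_singleton.1 hx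
    rw [LinearPMap.mkSpanSingleton'_apply, smul_eq_mul, mul_one, RingHom.id_apply]
    rcases le_or_gt c 0 with hc | hc
    · exact hc.trans (gauge_nonneg _)
    · rw [gauge_smul_of_nonneg hc.le, smul_eq_mul, le_mul_iff_one_le_right hc]
      exact one_le_gauge_of_notMem (hS₀.starConvex h0.1) habs.absorbs hz₀
  obtain ⟨Λ, hΛz, hΛle⟩ := exists_extension_of_le_sublinear f (gauge S₀)
    (fun c hc x => gauge_smul_of_nonneg hc.le x) (gauge_add_le hS₀ habs) hf
  have hΛz' : Λ (z - x₀) = 1 := (hΛz ⟨z - x₀, Submodule.mem_span_singleton_self _⟩).trans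
    (LinearPMap.mkSpanSingleton_apply ℝ ℝ _ _)
  refine ⟨Λ, fun x hx => ?_⟩
  have hx' : Λ (x - x₀) < 1 :=
    (hΛle _).trans_lt (gauge_lt_one_of_mem_algCore ((hcore _).2 (by rwa [add_sub_cancel])))
  rw [map_sub] at hΛz' hx'
  linarith

theorem Convex.exists_separation_of_disjoint_algCore (hA : Convex ℝ A) (hB : Convex ℝ B)
    {a₀ b₀ : W} (ha₀ : a₀ ∈ algCore A) (hb₀ : b₀ ∈ B) (hAB : Disjoint (algCore A) B) :
    ∃ Λ : W →ₗ[ℝ] ℝ, Λ ≠ 0 ∧ ∀ a ∈ A, ∀ b ∈ B, Λ b ≤ Λ a := by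
  have hsub : ∀ a ∈ algCore A, ∀ b ∈ B, a - b ∈ algCore (algCore A - B) := fun a ha b hb =>
    sub_mem_algCore_sub (hA.algCore_algCore.symm ▸ ha) hb
  have h0 : (0 : W) ∉ algCore A - B := by
    rintro ⟨a, ha, b, hb, hab⟩
    exact hAB.ne_of_mem ha hb (sub_eq_zero.1 hab)
  obtain ⟨Λ, hΛ⟩ := (hA.convex_algCore.sub hB).exists_lt_of_notMem (hsub a₀ ha₀ b₀ hb₀) h0
  have hlt : ∀ a ∈ algCore A, ∀ b ∈ B, Λ a < Λ b := fun a ha b hb => by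
    simpa [sub_neg] using hΛ _ (hsub a ha b hb)
  refine ⟨-Λ, fun hΛ0 => ?_, fun a ha b hb => ?_⟩
  · have := hlt a₀ ha₀ b₀ hb₀
    simp [neg_eq_zero.1 hΛ0] at this
  · simpa using hA.le_of_forall_algCore_lt ha₀ Λ (fun x hx => hlt x hx b hb) ha

end Separation

def normalCone {W : Type*} [AddCommGroup W] [Module ℝ W] (C : Set W) (w₀ : W) :
    Set (W →ₗ[ℝ] ℝ) :=
  {f | ∀ w ∈ C, f (w - w₀) ≤ 0}

section Optimality

variable {W : Type*} [AddCommGroup W] [Module ℝ W] {ψ : W → EReal} {C : Set W}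

theorem LinearMap.apply_eq_comp_inl_add_mul (Λ : W × ℝ →ₗ[ℝ] ℝ) (p : W × ℝ) :
    Λ p = Λ.comp (LinearMap.inl ℝ W ℝ) p.1 + p.2 * Λ (0, 1) := by
  conv_lhs => rw [show p = (p.1, 0) + p.2 • ((0 : W), (1 : ℝ)) by ext <;> simp]
  rw [map_add, map_smul, smul_eq_mul]
  rfl

theorem lt_of_mem_algCore_epi {p : W × ℝ} (hp : p ∈ algCore (epi ψ)) : ψ p.1 < p.2 := by
  obtain ⟨t, ht, hpt⟩ := exists_pos_add_smul_mem_of_mem_algCore hp (0, -1)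
  have hpt : ψ p.1 ≤ ((p.2 - t : ℝ) : EReal) := by simpa [epi, sub_eq_add_neg] using hpt
  exact hpt.trans_lt (EReal.coe_lt_coe_iff.2 (by linarith))

theorem exists_nonvertical_separation (hψ : Convex ℝ (epi ψ))
    (hψcore : (algCore (epi ψ)).Nonempty) (hC : Convex ℝ C) {u : W} (hu : ψ u ≠ ⊤)
    (huC : u ∈ algCore C) {w₀ : W} (hw₀C : w₀ ∈ C) {r : ℝ} (hr : ψ w₀ = r) {ℓ : W →ₗ[ℝ] ℝ}
    (hℓ : ∀ w ∈ C, ((r + ℓ (w - w₀) : ℝ) : EReal) ≤ ψ w) :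
    ∃ N : W →ₗ[ℝ] ℝ, ∀ a ∈ epi ψ, ∀ c ∈ C, N c + (r + ℓ (c - w₀)) ≤ N a.1 + a.2 := by
  set B : Set (W × ℝ) := {p | p.1 ∈ C ∧ p.2 ≤ r + ℓ (p.1 - w₀)}
  have hB : Convex ℝ B := by
    rintro p ⟨hpC, hp⟩ q ⟨hqC, hq⟩ s t hs ht hst
    refine ⟨hC hpC hqC hs ht hst, ?_⟩
    simp only [Prod.fst_add, Prod.snd_add, Prod.smul_fst, Prod.smul_snd, smul_eq_mul, map_sub,
      map_add, map_smul] at hp hq ⊢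
    have hsum : ∀ x : ℝ, x = s * x + t * x := fun x => by rw [← add_mul, hst, one_mul]
    linarith [mul_le_mul_of_nonneg_left hp hs, mul_le_mul_of_nonneg_left hq ht, hsum r,
      hsum (ℓ w₀)]
  have hdisj : Disjoint (algCore (epi ψ)) B := by
    refine Set.disjoint_left.2 fun p hp ⟨hpC, hpr⟩ => ?_
    have h := (hℓ p.1 hpC).trans_lt (lt_of_mem_algCore_epi hp)
    exact absurd (EReal.coe_lt_coe_iff.1 h) (not_lt.2 hpr)
  have hw₀epi : (w₀, r) ∈ epi ψ := hr.le
  obtain ⟨p₀, hp₀⟩ := hψcore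
  obtain ⟨Λ, hΛ0, hΛ⟩ :=
    hψ.exists_separation_of_disjoint_algCore hB hp₀ (b₀ := (w₀, r)) ⟨hw₀C, by simp⟩ hdisj
  set N := Λ.comp (LinearMap.inl ℝ W ℝ)
  set β := Λ (0, 1)
  have hΛ_apply : ∀ p : W × ℝ, Λ p = N p.1 + p.2 * β := Λ.apply_eq_comp_inl_add_mul
  have hβ : 0 < β := by
    refine lt_of_le_of_ne ?_ fun hβ0 => hΛ0 ?_
    · have := hΛ _ hw₀epi (w₀, r - 1) ⟨hw₀C, by simp⟩
      rw [hΛ_apply, hΛ_apply] at this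
      linarith
    -- a vertical separating hyperplane would separate `dom ψ ∋ u` from `C`, whose core contains `u`
    have hN : N = 0 := LinearMap.eq_zero_of_isMaxOn_algCore huC fun c hc => by
      have := hΛ (u, (ψ u).toReal) (EReal.le_coe_toReal hu) (c, r + ℓ (c - w₀)) ⟨hc, le_rfl⟩
      simpa [hΛ_apply, ← hβ0] using this
    refine LinearMap.ext fun p => ?_
    simp [hΛ_apply p, hN, ← hβ0]
  refine ⟨β⁻¹ • N, fun a ha c hc => ?_⟩
  have := hΛ a ha (c, r + ℓ (c - w₀)) ⟨hc, le_rfl⟩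
  rw [hΛ_apply, hΛ_apply] at this
  simp only [LinearMap.smul_apply, smul_eq_mul]
  calc β⁻¹ * N c + (r + ℓ (c - w₀)) = β⁻¹ * (N c + (r + ℓ (c - w₀)) * β) := by
        field_simp
    _ ≤ β⁻¹ * (N a.1 + a.2 * β) := by gcongr
    _ = β⁻¹ * N a.1 + a.2 := by field_simp

theorem exists_mem_subdiff_sub_mem_normalCone (hψbot : ∀ w, ψ w ≠ ⊥) (hψ : Convex ℝ (epi ψ))
    (hψcore : (algCore (epi ψ)).Nonempty) (hC : Convex ℝ C) {u : W} (hu : ψ u ≠ ⊤)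
    (huC : u ∈ algCore C) {w₀ : W} (hw₀C : w₀ ∈ C) (hw₀ : ψ w₀ ≠ ⊤) {ℓ : W →ₗ[ℝ] ℝ}
    (hℓ : ∀ w ∈ C, ψ w₀ + ((ℓ (w - w₀) : ℝ) : EReal) ≤ ψ w) :
    ∃ ℓ₁ ∈ subdiff ψ w₀, ℓ - ℓ₁ ∈ normalCone C w₀ := by
  obtain ⟨r, hr⟩ : ∃ r : ℝ, ψ w₀ = r := ⟨_, (EReal.coe_toReal hw₀ (hψbot w₀)).symm⟩
  obtain ⟨N, hN⟩ := exists_nonvertical_separation hψ hψcore hC hu huC hw₀C hr (ℓ := ℓ)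
    fun w hw => by simpa [hr] using hℓ w hw
  refine ⟨-N, fun w => ?_, fun c hc => ?_⟩
  · rcases eq_or_ne (ψ w) ⊤ with hw | hw
    · simp [hw]
    have := hN (w, (ψ w).toReal) (EReal.le_coe_toReal hw) w₀ hw₀C
    rw [hr, ← EReal.coe_toReal hw (hψbot w), ← EReal.coe_add, EReal.coe_le_coe_iff]
    simp only [sub_self, map_zero, add_zero, LinearMap.neg_apply, map_sub] at this ⊢
    linarith
  · have := hN (w₀, r) hr.le c hc
    simp only [LinearMap.sub_apply, LinearMap.neg_apply, map_sub] at this ⊢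
    linarith

end Optimality

section OptimalValue

variable {X Y : Type*} [AddCommGroup X] [Module ℝ X] [AddCommGroup Y] [Module ℝ Y]

theorem coprod_mem_subdiff_iff {φ : X × Y → EReal} {xb : X} {yb : Y} {f : X →ₗ[ℝ] ℝ}
    {g : Y →ₗ[ℝ] ℝ} : f.coprod g ∈ subdiff φ (xb, yb) ↔ (f, g) ∈ subdiff2 φ xb yb :=
  Iff.rfl

theorem mem_coderiv_iff {F : X → Set Y} {xb : X} {yb : Y} {f : X →ₗ[ℝ] ℝ} {g : Y →ₗ[ℝ] ℝ} :
    f ∈ coderiv F xb yb g ↔ yb ∈ F xb ∧ f.coprod (-g) ∈ normalCone (gph F) (xb, yb) := by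
  refine and_congr_right' ⟨fun hf w hw => ?_, fun hf x y hy => ?_⟩
  · simpa [sub_eq_add_neg] using hf w.1 w.2 hw
  · simpa [sub_eq_add_neg] using hf (x, y) hy

theorem mem_subdiff_optVal {F : X → Set Y} {φ : X × Y → EReal} {xb : X} {yb : Y}
    (hmin : optVal F φ xb = φ (xb, yb)) {h f : X →ₗ[ℝ] ℝ} {g : Y →ₗ[ℝ] ℝ}
    (hfg : (f, g) ∈ subdiff2 φ xb yb) (hh : h - f ∈ coderiv F xb yb g) :
    h ∈ subdiff (optVal F φ) xb := by
  intro x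
  refine le_iInf₂ fun y hy => ?_
  have hcod := hh.2 x y hy
  rw [LinearMap.sub_apply] at hcod
  calc optVal F φ xb + h (x - xb) ≤ φ (xb, yb) + ((f (x - xb) + g (y - yb) : ℝ) : EReal) := by
        rw [hmin]
        gcongr
        linarith
    _ ≤ φ (x, y) := hfg (x, y)

end OptimalValue

theorem subdifferential_optimal_value_general {X Y : Type*} [AddCommGroup X] [Module ℝ X]
    [AddCommGroup Y] [Module ℝ Y]
    (F : X → Set Y) (φ : X × Y → EReal)
    (hφbot : ∀ u : X × Y, φ u ≠ ⊥)
    (hFconv : Convex ℝ (gph F)) (hφconv : Convex ℝ (epi φ))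
    (hφcore : (algCore (epi φ)).Nonempty)
    (hqc : (algCore {u : X × Y | φ u ≠ ⊤} ∩ algCore (gph F)).Nonempty)
    (xb : X) (hxb : optVal F φ xb ≠ ⊤)
    (yb : Y) (hyb : yb ∈ F xb) (hmin : optVal F φ xb = φ (xb, yb)) :
    subdiff (optVal F φ) xb
      = {h | ∃ (f : X →ₗ[ℝ] ℝ) (g : Y →ₗ[ℝ] ℝ),
          (f, g) ∈ subdiff2 φ xb yb ∧ h - f ∈ coderiv F xb yb g} := by
  ext h
  refine ⟨fun hh => ?_, fun ⟨f, g, hfg, hcod⟩ => mem_subdiff_optVal hmin hfg hcod⟩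
  obtain ⟨u, hu, huF⟩ := hqc
  have hgph : ∀ w ∈ gph F,
      φ (xb, yb) + ((h.comp (LinearMap.fst ℝ X Y) (w - (xb, yb)) : ℝ) : EReal) ≤ φ w :=
    fun w hw => by simpa [hmin] using (hh w.1).trans (iInf₂_le w.2 hw)
  obtain ⟨ℓ, hℓ, hℓN⟩ := exists_mem_subdiff_sub_mem_normalCone hφbot hφconv hφcore hFconv hu.1
    huF hyb (hmin ▸ hxb) hgph
  refine ⟨ℓ.comp (LinearMap.inl ℝ X Y), ℓ.comp (LinearMap.inr ℝ X Y), ?_, ?_⟩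
  · rwa [← coprod_mem_subdiff_iff, LinearMap.coprod_comp_inl_inr]
  · refine mem_coderiv_iff.2 ⟨hyb, ?_⟩
    convert hℓN using 1
    ext <;> simp

theorem subdifferential_optimal_value {X Y : Type*} [AddCommGroup X] [Module ℝ X]
    [AddCommGroup Y] [Module ℝ Y]
    (F : X → Set Y) (φ : X × Y → EReal)
    (hφbot : ∀ u : X × Y, φ u ≠ ⊥)
    (hFconv : Convex ℝ (gph F)) (hφconv : Convex ℝ (epi φ))
    (hFcore : (algCore (gph F)).Nonempty) (hφcore : (algCore (epi φ)).Nonempty)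
    (hμbot : ∀ x : X, optVal F φ x ≠ ⊥)
    (hqc : (algCore {u : X × Y | φ u ≠ ⊤} ∩ algCore (gph F)).Nonempty)
    (xb : X) (hxb : optVal F φ xb ≠ ⊤)
    (yb : Y) (hyb : yb ∈ F xb) (hmin : optVal F φ xb = φ (xb, yb)) :
    subdiff (optVal F φ) xb
      = {h | ∃ (f : X →ₗ[ℝ] ℝ) (g : Y →ₗ[ℝ] ℝ),
          (f, g) ∈ subdiff2 φ xb yb ∧ h - f ∈ coderiv F xb yb g} :=
  subdifferential_optimal_value_general F φ hφbot hFconv hφconv hφcore hqc xb hxb yb hyb hmin
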